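/- arXiv:2211.05726 — 2 statements merged into one kernel-verified Lean document; each statement's English description precedes it below -/
import Mathlib

section
/- For any connected graph G on n ≥ 2 vertices with minimum degree δ ≥ 2, every spanning tree of G has at most (n-2)/(δ-1) full degree vertices. -/
/-!
In a tree on `n ≥ 2` vertices every degree is at least `1` and the degrees sum to `2(n - 1)`,
so the excesses `deg v - 1` sum to `n - 2`. A full degree vertex `v` of a spanning tree has
`deg_T v = deg_G v ≥ δ`, contributing an excess of at least `δ - 1`.
-/

open SimpleGraph

/-- Degree of `v` in `T` (as `Set.ncard` of the neighbor set). -/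
noncomputable def deg {V : Type*} (T : SimpleGraph V) (v : V) : ℕ :=
  (T.neighborSet v).ncard

/-- `T` is a spanning tree of `G`. -/
def IsSpanningTree {V : Type*} (G T : SimpleGraph V) : Prop :=
  T ≤ G ∧ T.IsTree

/-- Number of full degree vertices of the spanning tree `T` of `G`. -/
noncomputable def fullDegCount {V : Type*} (G T : SimpleGraph V) : ℕ :=
  {v : V | deg T v = deg G v}.ncard

/-- Number of leaves of `T`. -/
noncomputable def leafCount {V : Type*} (T : SimpleGraph V) : ℕ :=
  {v : V | deg T v = 1}.ncard

/-- `φ(G)`: maximum number of full degree vertices over all spanning trees. -/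
noncomputable def phi {V : Type*} (G : SimpleGraph V) : ℕ :=
  sSup {k | ∃ T : SimpleGraph V, IsSpanningTree G T ∧ fullDegCount G T = k}

/-- `λ(G)`: maximum number of leaves over all spanning trees. -/
noncomputable def lam {V : Type*} (G : SimpleGraph V) : ℕ :=
  sSup {k | ∃ T : SimpleGraph V, IsSpanningTree G T ∧ leafCount T = k}

/-- `S` is a connected dominating set of `G`. -/
def IsConnDomSet {V : Type*} (G : SimpleGraph V) (S : Set V) : Prop :=
  (G.induce S).Connected ∧ ∀ v : V, v ∈ S ∨ ∃ u ∈ S, G.Adj u v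

/-- `γ_C(G)`: minimum size of a connected dominating set. -/
noncomputable def gammaC {V : Type*} (G : SimpleGraph V) : ℕ :=
  sInf {k | ∃ S : Set V, IsConnDomSet G S ∧ S.ncard = k}

/-- Closed neighborhood of `v` in `G`. -/
def closedNbhd {V : Type*} (G : SimpleGraph V) (v : V) : Set V :=
  insert v (G.neighborSet v)

/-- The square of a graph: join vertices at distance at most 2. -/
def square {V : Type*} (G : SimpleGraph V) : SimpleGraph V where
  Adj u v := u ≠ v ∧ G.Reachable u v ∧ G.dist u v ≤ 2
  symm := ⟨by
    rintro u v ⟨h1, h2, h3⟩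
    exact ⟨h1.symm, h2.symm, by rwa [SimpleGraph.dist_comm]⟩⟩
  loopless := ⟨by rintro v ⟨h, -⟩; exact h rfl⟩

open Finset

theorem deg_eq_degree {V : Type*} (H : SimpleGraph V) (v : V) [Fintype (H.neighborSet v)] :
    deg H v = H.degree v :=
  Set.ncard_eq_toFinset_card' _

namespace SimpleGraph.IsTree

variable {V : Type*} [Fintype V] [Nontrivial V] {T : SimpleGraph V} [DecidableRel T.Adj]

theorem sum_degree_sub_one_add_two (hT : T.IsTree) :
    ∑ v, (T.degree v - 1) + 2 = Fintype.card V := by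
  have hpos : ∀ v ∈ univ, 1 ≤ T.degree v := fun v _ => hT.preconnected.degree_pos_of_nontrivial v
  have hsum : ∑ v, T.degree v + 2 = 2 * Fintype.card V := by
    rw [sum_degrees_eq_twice_card_edges, ← hT.card_edgeFinset]
    ring
  have hcard : ∑ _v : V, 1 = Fintype.card V := by simp
  rw [sum_tsub_distrib _ hpos, hcard]
  have : Fintype.card V ≤ ∑ v, T.degree v := hcard ▸ sum_le_sum hpos
  omega

theorem mul_card_add_two_le_card (hT : T.IsTree) {δ : ℕ} {S : Finset V}
    (hS : ∀ v ∈ S, δ ≤ T.degree v) : (δ - 1) * #S + 2 ≤ Fintype.card V := by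
  have hexcess : (δ - 1) * #S ≤ ∑ v, (T.degree v - 1) :=
    calc (δ - 1) * #S = ∑ _v ∈ S, (δ - 1) := by rw [sum_const, smul_eq_mul, mul_comm]
      _ ≤ ∑ v ∈ S, (T.degree v - 1) := sum_le_sum fun v hv => Nat.sub_le_sub_right (hS v hv) 1
      _ ≤ ∑ v, (T.degree v - 1) := sum_le_sum_of_subset (subset_univ S)
  have := hT.sum_degree_sub_one_add_two
  omega

end SimpleGraph.IsTree

theorem stmt1_general {V : Type*} [Fintype V] (G T : SimpleGraph V) (n δ : ℕ)
    (hn : n = Fintype.card V) (hn2 : 2 ≤ n) (hδ2 : 2 ≤ δ)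
    (hδ : ∀ v : V, δ ≤ deg G v) (hT : IsSpanningTree G T) :
    (fullDegCount G T : ℝ) ≤ (n - 2 : ℝ) / (δ - 1) := by
  classical
  have : Nontrivial V := Fintype.one_lt_card_iff_nontrivial.mp (by omega)
  set S := {v : V | deg T v = deg G v}.toFinset
  have hS : ∀ v ∈ S, δ ≤ T.degree v := fun v hv => by
    have hfull : deg T v = deg G v := by simpa [S] using hv
    exact deg_eq_degree T v ▸ hfull ▸ hδ v
  have hbound : ((δ - 1 : ℕ) : ℝ) * #S + 2 ≤ n := by
    exact_mod_cast hn ▸ hT.2.mul_card_add_two_le_card hS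
  have hδ1 : (1 : ℝ) < δ := by exact_mod_cast hδ2
  rw [fullDegCount, Set.ncard_eq_toFinset_card', le_div_iff₀ (by linarith)]
  push_cast [Nat.cast_sub (by omega : 1 ≤ δ)] at hbound
  linarith

theorem stmt1 {V : Type*} [Fintype V] (G T : SimpleGraph V) (n δ : ℕ)
    (hn : n = Fintype.card V) (hn2 : 2 ≤ n) (hG : G.Connected) (hδ2 : 2 ≤ δ)
    (hδ : ∀ v : V, δ ≤ deg G v) (hT : IsSpanningTree G T) :
    (fullDegCount G T : ℝ) ≤ (n - 2 : ℝ) / (δ - 1) :=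
  stmt1_general G T n δ hn hn2 hδ2 hδ hT
end

section
/- For r ≥ 3 and m ≥ 3, the graph G = K_{r-1} □ C_m on n = (r-1)m vertices satisfies φ(G) ≥ m - 2 = n/(r-1) - 2, where φ(G) is the maximum number of full degree vertices in a spanning tree. -/
open SimpleGraph

/-!
Fix a vertex `c` of `K_{r-1}`. The comb in `K_{r-1} □ C_m` formed by the spine
`(c,0), …, (c,m-1)` and the teeth `(w,j)(c,j)` is acyclic: every vertex other than `(c,0)` has
exactly one neighbour (its parent) of smaller height, so the highest vertex of a cycle could not
have two distinct cycle neighbours. The inner spine vertices `(c,j)`, `0 < j < m-1`, already have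
full degree in the comb, and they keep it in any spanning tree extending the comb.
-/

theorem SimpleGraph.pathGraph_adj_of_cycleGraph_adj {m : ℕ} {i j : Fin m} (hi₀ : i.val ≠ 0)
    (hi : i.val + 1 ≠ m) (h : (cycleGraph m).Adj i j) : (pathGraph m).Adj i j := by
  rw [cycleGraph_adj'] at h
  rw [pathGraph_adj]
  rcases lt_trichotomy i j with hij | rfl | hji
  · rw [Fin.coe_sub_iff_lt.2 hij, Fin.coe_sub_iff_le.2 hij.le] at h
    omega
  · rw [Fin.coe_sub_iff_le.2 le_rfl] at h; omega
  · rw [Fin.coe_sub_iff_le.2 hji.le, Fin.coe_sub_iff_lt.2 hji] at h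
    omega

theorem SimpleGraph.isAcyclic_of_adj_parent {V α : Type*} [LinearOrder α] {G : SimpleGraph V}
    (p : V → V) (μ : V → α) (hp : ∀ v, p v ≠ v → μ (p v) < μ v)
    (hadj : ∀ ⦃u v⦄, G.Adj u v → p u = v ∨ p v = u) : G.IsAcyclic := by
  classical
  intro v c hc
  obtain ⟨x, hx, hmax⟩ := c.support.toFinset.exists_max_image μ ⟨v, by simp⟩
  rw [List.mem_toFinset] at hx
  -- a neighbour `y` of a highest vertex `x` cannot be a child of `x`, so it is its parent
  have eq_parent : ∀ y ∈ c.support, G.Adj x y → y = p x := fun y hy hxy ↦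
    (hadj hxy).resolve_right (fun h ↦ ((hmax y (List.mem_toFinset.2 hy)).trans_lt
      (h ▸ hp y (h ▸ hxy.ne))).false) |>.symm
  set c' := c.rotate x hx
  have hc' : c'.IsCycle := hc.rotate hx
  have hsnd := eq_parent _ ((c.mem_support_rotate_iff x hx).1 (c'.getVert_mem_support 1))
    (c'.adj_snd hc'.not_nil)
  have hpen := eq_parent _ ((c.mem_support_rotate_iff x hx).1 (c'.getVert_mem_support _))
    (c'.adj_penultimate hc'.not_nil).symm
  exact hc'.snd_ne_penultimate (hsnd.trans hpen.symm)

theorem le_phi_of_isAcyclic {V : Type*} [Finite V] {G H : SimpleGraph V} (hG : G.Connected)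
    (hle : H ≤ G) (hH : H.IsAcyclic) :
    {v | H.neighborSet v = G.neighborSet v}.ncard ≤ phi G := by
  obtain ⟨T, hHT, hTG, hT⟩ := hG.exists_isTree_le_of_le_of_isAcyclic hle hH
  have hfull : {v | H.neighborSet v = G.neighborSet v} ⊆ {v | deg T v = deg G v} :=
    fun v (hv : H.neighborSet v = G.neighborSet v) ↦ congrArg Set.ncard <|
      (neighborSet_mono hTG v).antisymm (hv ▸ neighborSet_mono hHT v)
  have hbdd : BddAbove {k | ∃ T, IsSpanningTree G T ∧ fullDegCount G T = k} :=
    ⟨Nat.card V, by rintro _ ⟨T, -, rfl⟩; exact Set.ncard_le_card _⟩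
  exact (Set.ncard_le_ncard hfull).trans (le_csSup hbdd ⟨T, ⟨hTG, hT⟩, rfl⟩)

section Comb

variable {W : Type*} [DecidableEq W] {c : W} {m : ℕ}

-- `(c, 0)` is its own parent (truncated subtraction); `fromRel` discards that loop.
def combParent (c : W) (v : W × Fin m) : W × Fin m :=
  if v.1 = c then (c, ⟨v.2 - 1, by omega⟩) else (c, v.2)

def comb (c : W) (m : ℕ) : SimpleGraph (W × Fin m) :=
  .fromRel fun u v ↦ combParent c u = v

theorem comb_isAcyclic : (comb c m).IsAcyclic := by
  refine isAcyclic_of_adj_parent (combParent c)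
    (fun v ↦ 2 * v.2.val + if v.1 = c then 0 else 1) ?_ fun u v h ↦ ((fromRel_adj ..).1 h).2
  rintro ⟨w, j⟩ hne
  by_cases hw : w = c
  · subst hw
    have hj : j.val ≠ 0 := fun h ↦ hne (by simp [combParent, Fin.ext_iff, h])
    simp only [combParent, if_true]
    omega
  · simp [combParent, hw]

theorem adj_combParent {H : SimpleGraph W} (hc : H.IsUniversal c) {v : W × Fin m}
    (hv : v ≠ combParent c v) : (H □ cycleGraph m).Adj v (combParent c v) := by
  obtain ⟨w, j⟩ := v
  by_cases hw : w = c
  · subst hw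
    have hj : j.val ≠ 0 := fun h ↦ hv (by simp [combParent, Fin.ext_iff, h])
    refine Or.inr ⟨(pathGraph_le_cycleGraph ?_).symm, ?_⟩ <;> simp [combParent, pathGraph_adj]
    omega
  · simpa [combParent, hw] using (hc (Ne.symm hw)).symm

theorem comb_le {H : SimpleGraph W} (hc : H.IsUniversal c) : comb c m ≤ H □ cycleGraph m := by
  intro u v h
  obtain ⟨hne, rfl | rfl⟩ := (fromRel_adj ..).1 h
  · exact adj_combParent hc hne
  · exact (adj_combParent hc hne.symm).symm

theorem neighborSet_comb {H : SimpleGraph W} (hc : H.IsUniversal c) {j : Fin m}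
    (hj₀ : j.val ≠ 0) (hj : j.val + 1 ≠ m) :
    (comb c m).neighborSet (c, j) = (H □ cycleGraph m).neighborSet (c, j) := by
  refine (neighborSet_mono (comb_le hc) _).antisymm ?_
  rintro ⟨w, k⟩ (⟨hcw, rfl⟩ | ⟨hjk, rfl⟩)
  · rw [mem_neighborSet, comb, fromRel_adj]
    refine ⟨by simpa using hcw.ne, Or.inr ?_⟩
    simp [combParent, hcw.ne.symm]
  · dsimp only at hjk ⊢
    have := pathGraph_adj.1 (pathGraph_adj_of_cycleGraph_adj hj₀ hj hjk)
    rw [mem_neighborSet, comb, fromRel_adj]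
    refine ⟨by simpa using hjk.ne, ?_⟩
    simp [combParent, Prod.ext_iff, Fin.ext_iff]
    omega

theorem le_ncard_neighborSet_comb_eq {H : SimpleGraph W} [Finite W] (hc : H.IsUniversal c) :
    m - 2 ≤ {v | (comb c m).neighborSet v = (H □ cycleGraph m).neighborSet v}.ncard := by
  let spine (t : Fin (m - 2)) : W × Fin m := (c, ⟨t + 1, by omega⟩)
  calc m - 2 = (Set.univ : Set (Fin (m - 2))).ncard := by simp
    _ ≤ _ := Set.ncard_le_ncard_of_injOn spine
      (fun t _ ↦ neighborSet_comb hc (by simp) (by simp; omega))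
      (fun s _ t _ h ↦ by simpa [spine, Fin.ext_iff] using h)

end Comb

theorem le_phi_boxProd_cycleGraph {W : Type*} [Finite W] {H : SimpleGraph W} {c : W}
    (hc : H.IsUniversal c) (m : ℕ) : m - 2 ≤ phi (H □ cycleGraph m) := by
  classical
  rcases m with _ | m
  · simp
  exact (le_ncard_neighborSet_comb_eq hc).trans <|
    le_phi_of_isAcyclic ((Connected.of_isUniversal hc).boxProd cycleGraph_connected)
      (comb_le hc) comb_isAcyclic

theorem stmt14_general (r m : ℕ) (hr : 3 ≤ r) :
    m - 2 ≤ phi (completeGraph (Fin (r - 1)) □ SimpleGraph.cycleGraph m) :=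
  le_phi_boxProd_cycleGraph (c := ⟨0, by omega⟩) IsUniversal.top m

theorem stmt14 (r m : ℕ) (hr : 3 ≤ r) (hm : 3 ≤ m) :
    m - 2 ≤ phi (completeGraph (Fin (r - 1)) □ SimpleGraph.cycleGraph m) :=
  stmt14_general r m hr
end
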